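/- arXiv:2001.00047 — 2 statements merged into one kernel-verified Lean document; each statement's English description precedes it below -/
import Mathlib

section
/- Let p, q, w, r, δ₁, s be positive reals with δ₁ ∈ (0, 1/4), let t' be a positive real, and assume p·q·t' ≤ s. Then p·q·t'·r·(1+δ₁)·w ≤ (p·q·t'/(1 + p·q·t'))·r·(1-δ₁)·w·(1 + 4·δ₁ + (1 + 4·δ₁)·s). -/
theorem bitcoin_absolute_rewards_key_ineq
    (p q w r δ₁ s t' : ℝ)
    (hp : 0 < p) (hq : 0 < q) (hw : 0 < w) (hr : 0 < r) (hs : 0 < s)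
    (hδ₁ : 0 < δ₁) (hδ₁' : δ₁ < 1 / 4) (ht' : 0 < t')
    (hts : p * q * t' ≤ s) :
    p * q * t' * r * (1 + δ₁) * w ≤
      (p * q * t' / (1 + p * q * t')) * r * (1 - δ₁) * w *
        (1 + 4 * δ₁ + (1 + 4 * δ₁) * s) := by
  have hx : 0 < p * q * t' := by positivity
  have h1 : 0 < 1 + p * q * t' := by linarith
  rw [div_mul_eq_mul_div, div_mul_eq_mul_div, div_mul_eq_mul_div, div_mul_eq_mul_div,
    le_div_iff₀ h1]
  have key : (1 + δ₁) * (1 + p * q * t') ≤ (1 - δ₁) * ((1 + 4 * δ₁) * (1 + s)) := by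
    have h2 : (1 + δ₁) * (1 + p * q * t') ≤ (1 + δ₁) * (1 + s) := by nlinarith
    have h3 : (1 + δ₁) * (1 + s) ≤ (1 - δ₁) * ((1 + 4 * δ₁) * (1 + s)) := by
      nlinarith [mul_nonneg (by nlinarith : (0:ℝ) ≤ 2 * δ₁ - 4 * δ₁ * δ₁) (by linarith : (0:ℝ) ≤ 1 + s)]
    linarith
  have hpos : 0 < p * q * t' * r * w := by positivity
  nlinarith [mul_le_mul_of_nonneg_left key (le_of_lt hpos)]
end

section
/- Let p, q, w, r, c, φ, δ₁, s be positive reals with δ₁ ∈ (0, 1/4), φ ∈ (0, 1 - s), t' > 0, p·q·t' ≤ s, and c ≤ p·w·(1-δ₁)·φ/(1 + p·q·t'). Define L = (p·q·t'/(1+p·q·t'))·r·(1-δ₁)·w - c·q·t'·r and U = p·q·t'·r·(1+δ₁)·w - c·q·t'·r. Then L ≥ (p·q·t'/(1+p·q·t'))·r·(1-δ₁)·w·(1-φ) > 0 and U - L ≤ L·(4·δ₁ + (1+4·δ₁)·s)/(1-φ). -/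
theorem bitcoin_rewards_minus_cost_core
    (p q w r c φ δ₁ s t' : ℝ)
    (hp : 0 < p) (hq : 0 < q) (hw : 0 < w) (hr : 0 < r) (hc : 0 < c)
    (hφ0 : 0 < φ) (hφ1 : φ < 1 - s)
    (hδ₁ : 0 < δ₁) (hδ₁' : δ₁ < 1 / 4) (hs : 0 < s) (ht' : 0 < t')
    (hts : p * q * t' ≤ s)
    (hcost : c ≤ p * w * (1 - δ₁) * φ / (1 + p * q * t'))
    (L U : ℝ)
    (hL : L = (p * q * t' / (1 + p * q * t')) * r * (1 - δ₁) * w - c * q * t' * r)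
    (hU : U = p * q * t' * r * (1 + δ₁) * w - c * q * t' * r) :
    L ≥ (p * q * t' / (1 + p * q * t')) * r * (1 - δ₁) * w * (1 - φ) ∧
    (0 : ℝ) < (p * q * t' / (1 + p * q * t')) * r * (1 - δ₁) * w * (1 - φ) ∧
    U - L ≤ L * (4 * δ₁ + (1 + 4 * δ₁) * s) / (1 - φ) := by
  have hA : 0 < p * q * t' := by positivity
  have hD : 0 < 1 + p * q * t' := by linarith
  have h1φ : 0 < 1 - φ := by linarith
  have hδ : 0 < 1 - δ₁ := by linarith
  have hdiv : p * q * t' / (1 + p * q * t') * (1 + p * q * t') = p * q * t' :=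
    div_mul_cancel₀ _ (ne_of_gt hD)
  have hQpos : 0 < p * q * t' / (1 + p * q * t') := div_pos hA hD
  have hcost' : c * (1 + p * q * t') ≤ p * w * (1 - δ₁) * φ := (le_div_iff₀ hD).mp hcost
  set Q := p * q * t' / (1 + p * q * t') with hQ
  have h0 : c * q * t' * r ≤ Q * (r * (1 - δ₁) * w * φ) := by
    rw [hQ, div_mul_eq_mul_div, le_div_iff₀ hD]
    nlinarith [mul_le_mul_of_nonneg_right hcost' (by positivity : (0:ℝ) ≤ q * t' * r)]
  have h1 : L ≥ Q * r * (1 - δ₁) * w * (1 - φ) := by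
    subst hL; nlinarith [h0]
  have h2 : (0:ℝ) < Q * r * (1 - δ₁) * w * (1 - φ) := by positivity
  refine ⟨h1, h2, ?_⟩
  rw [le_div_iff₀ h1φ]
  have hkey : 2 * δ₁ + (1 + δ₁) * (p * q * t') ≤ (1 - δ₁) * (4 * δ₁ + (1 + 4 * δ₁) * s) := by
    nlinarith [mul_le_mul_of_nonneg_left hts (by linarith : (0:ℝ) ≤ 1 + δ₁),
      mul_nonneg (mul_nonneg hδ₁.le (by linarith : (0:ℝ) ≤ 1 - 2 * δ₁)) hs.le,
      mul_nonneg hδ₁.le (by linarith : (0:ℝ) ≤ 1 - 2 * δ₁)]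
  have hK : 0 < 4 * δ₁ + (1 + 4 * δ₁) * s := by nlinarith
  have hEq : (U - L) * (1 + p * q * t') =
      p * q * t' * r * w * (2 * δ₁ + (1 + δ₁) * (p * q * t')) := by
    subst hU hL; linear_combination (-(r * (1 - δ₁) * w)) * hdiv
  have hEq2 : Q * r * (1 - δ₁) * w * (4 * δ₁ + (1 + 4 * δ₁) * s) * (1 + p * q * t') =
      p * q * t' * r * (1 - δ₁) * w * (4 * δ₁ + (1 + 4 * δ₁) * s) := by
    linear_combination (r * (1 - δ₁) * w * (4 * δ₁ + (1 + 4 * δ₁) * s)) * hdiv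
  have h5 : (U - L) * (1 + p * q * t') ≤
      Q * r * (1 - δ₁) * w * (4 * δ₁ + (1 + 4 * δ₁) * s) * (1 + p * q * t') := by
    rw [hEq, hEq2]
    calc p * q * t' * r * w * (2 * δ₁ + (1 + δ₁) * (p * q * t'))
        ≤ p * q * t' * r * w * ((1 - δ₁) * (4 * δ₁ + (1 + 4 * δ₁) * s)) :=
          mul_le_mul_of_nonneg_left hkey (by positivity)
      _ = p * q * t' * r * (1 - δ₁) * w * (4 * δ₁ + (1 + 4 * δ₁) * s) := by ring
  have h3 : U - L ≤ Q * r * (1 - δ₁) * w * (4 * δ₁ + (1 + 4 * δ₁) * s) :=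
    le_of_mul_le_mul_right h5 hD
  calc (U - L) * (1 - φ) ≤ Q * r * (1 - δ₁) * w * (4 * δ₁ + (1 + 4 * δ₁) * s) * (1 - φ) :=
        mul_le_mul_of_nonneg_right h3 (le_of_lt h1φ)
    _ = Q * r * (1 - δ₁) * w * (1 - φ) * (4 * δ₁ + (1 + 4 * δ₁) * s) := by ring
    _ ≤ L * (4 * δ₁ + (1 + 4 * δ₁) * s) := mul_le_mul_of_nonneg_right h1 (le_of_lt hK)
end
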